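/- arXiv:2206.12222 — 2 statements merged into one kernel-verified Lean document; each statement's English description precedes it below -/
import Mathlib

section
/- For j ∈ [0, i), we have nss[j] = i if and only if either (j = i-1 and S_j ≻ S_i) or (j has a last child j' in the pss-tree and nss[j'] = i). -/
/-!
Take `j < i = nss[j]` with `i ≠ j + 1`. Every suffix starting in `(j, i)` is larger than `S_j`,
and the smallest of them, say `S_{j'}`, has `pss[j'] = j` and `nss[j'] = i`. No later position
`k` has `pss[k] = j`: that would force `S_j < S_k ≤ S_m` for all `m ∈ (j, k]`, contradicting the
minimality of `S_{j'}` if `k < i` and `S_i < S_j` if `k ≥ i`. Conversely, a child `j'` of `j`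
forces `nss[j] > j' ≥ j + 1`, so the forward direction applied to `nss[j]` produces a last child
of `j`, which must be `j'`.
-/

/-- Strict lexicographic order on strings over a totally ordered alphabet. -/
def Slt {α : Type*} [LinearOrder α] (u v : List α) : Prop := List.Lex (· < ·) u v

/-- `S` is null-terminated: its last character is strictly smaller than every other character. -/
def NullTerminated {α : Type*} [LinearOrder α] (S : List α) : Prop :=
  ∀ i, ∀ _h : i + 1 < S.length, S[S.length - 1]'(by omega) < S[i]'(by omega)

/-- `nss S i` : position of the next smaller suffix of `i` (with `S.drop S.length = ε`). -/
noncomputable def nss {α : Type*} [LinearOrder α] (S : List α) (i : ℕ) : ℕ :=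
  sInf { j | i < j ∧ j ≤ S.length ∧ Slt (S.drop j) (S.drop i) }

/-- `pss S i` : position of the previous smaller suffix of `i`, or `-1` if none exists. -/
noncomputable def pss {α : Type*} [LinearOrder α] (S : List α) (i : ℕ) : ℤ :=
  sSup (insert (-1) { j : ℤ | 0 ≤ j ∧ j < (i : ℤ) ∧ Slt (S.drop j.toNat) (S.drop i) })

/-- A non-empty string is a Lyndon word iff it is smaller than all of its proper suffixes. -/
def IsLyndon {α : Type*} [LinearOrder α] (w : List α) : Prop :=
  w ≠ [] ∧ ∀ j, 0 < j → j < w.length → Slt w (w.drop j)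

/-- `Ls S i` : the Lyndon prefix of the suffix `S.drop i`, which equals `S[i..nss[i])`. -/
noncomputable def Ls {α : Type*} [LinearOrder α] (S : List α) (i : ℕ) : List α :=
  (S.drop i).take (nss S i - i)

theorem drop_eq_drop_iff {β : Type*} {S : List β} {i j : ℕ} (hi : i ≤ S.length)
    (hj : j ≤ S.length) :
    S.drop i = S.drop j ↔ i = j := by
  refine ⟨fun h => ?_, fun h => h ▸ rfl⟩
  have := congrArg List.length h
  simp only [List.length_drop] at this
  omega

section

variable {α : Type*} [LinearOrder α] {S : List α} {i j j' k : ℕ}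

theorem nss_mem (hj : j < S.length) :
    j < nss S j ∧ nss S j ≤ S.length ∧ S.drop (nss S j) < S.drop j := by
  obtain ⟨a, l, hl⟩ := List.exists_cons_of_ne_nil (mt List.drop_eq_nil_iff.1 hj.not_ge)
  have hlen : S.drop S.length < S.drop j := by
    rw [List.drop_length, hl]
    exact List.Lex.nil
  exact Nat.sInf_mem (s := { k | j < k ∧ k ≤ S.length ∧ Slt (S.drop k) (S.drop j) })
    ⟨S.length, hj, le_rfl, hlen⟩

theorem nss_eq_iff (hji : j < i) (hi : i ≤ S.length) :
    nss S j = i ↔ S.drop i < S.drop j ∧ ∀ k, j < k → k < i → S.drop j < S.drop k := by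
  constructor
  · rintro rfl
    refine ⟨(nss_mem (hji.trans_le hi)).2.2, fun k hjk hki => ?_⟩
    have hle : S.drop j ≤ S.drop k :=
      not_lt.1 fun hkj => Nat.notMem_of_lt_sInf hki ⟨hjk, by omega, hkj⟩
    exact hle.lt_of_ne fun h => hjk.ne ((drop_eq_drop_iff (by omega) (by omega)).1 h)
  · rintro ⟨hij, hmid⟩
    refine le_antisymm (Nat.sInf_le ⟨hji, hi, hij⟩) (le_csInf ⟨i, hji, hi, hij⟩ ?_)
    rintro k ⟨hjk, -, hkj⟩
    by_contra! hki
    exact lt_asymm hkj (hmid k hjk hki)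

theorem pss_eq_natCast_iff :
    pss S j' = (j : ℤ) ↔
      j < j' ∧ S.drop j < S.drop j' ∧ ∀ m, j < m → m < j' → S.drop j' ≤ S.drop m := by
  set T := insert (-1) { m : ℤ | 0 ≤ m ∧ m < (j' : ℤ) ∧ Slt (S.drop m.toNat) (S.drop j') }
  change sSup T = j ↔ _
  have hbdd : BddAbove T := by
    refine ⟨j', ?_⟩
    rintro x (rfl | ⟨-, hx, -⟩) <;> omega
  have mem_T {m : ℕ} (hm : m < j') (hlt : S.drop m < S.drop j') : (m : ℤ) ∈ T :=
    Or.inr ⟨m.cast_nonneg, by exact_mod_cast hm, by rwa [Int.toNat_natCast]⟩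
  constructor
  · intro h
    have hmem : (j : ℤ) ∈ T := h ▸ Int.csSup_mem ⟨-1, Set.mem_insert _ _⟩ hbdd
    obtain h' | ⟨-, hjj', hlt⟩ := hmem
    · omega
    refine ⟨by exact_mod_cast hjj', by rwa [Int.toNat_natCast] at hlt,
      fun m hjm hmj' => not_lt.1 fun hm => ?_⟩
    have := h ▸ le_csSup hbdd (mem_T hmj' hm)
    omega
  · rintro ⟨hjj', hlt, hmin⟩
    refine IsGreatest.csSup_eq ⟨mem_T hjj' hlt, ?_⟩
    rintro x (rfl | ⟨hx0, hxj', hx⟩)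
    · omega
    lift x to ℕ using hx0
    by_contra! hjx
    rw [Int.toNat_natCast] at hx
    exact (hmin x (by exact_mod_cast hjx) (by exact_mod_cast hxj')).not_gt hx

theorem drop_le_drop_of_pss_eq (h : pss S j' = (j : ℤ)) (hjk : j < k) (hkj' : k ≤ j') :
    S.drop j' ≤ S.drop k := by
  obtain rfl | hkj' := hkj'.eq_or_lt
  · exact le_rfl
  · exact (pss_eq_natCast_iff.1 h).2.2 k hjk hkj'

theorem lt_nss_of_pss_eq (hj : j < S.length) (h : pss S j' = (j : ℤ)) : j' < nss S j := by
  obtain ⟨hjn, -, hnj⟩ := nss_mem hj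
  by_contra! hnj'
  have hjj' : S.drop j < S.drop j' := (pss_eq_natCast_iff.1 h).2.1
  exact lt_asymm hnj (hjj'.trans_le (drop_le_drop_of_pss_eq h hjn hnj'))

def IsLastChild (S : List α) (j j' : ℕ) : Prop :=
  j' < S.length ∧ pss S j' = (j : ℤ) ∧ ∀ k, k < S.length → j' < k → pss S k ≠ (j : ℤ)

theorem IsLastChild.unique {j'' : ℕ} (h' : IsLastChild S j j') (h'' : IsLastChild S j j'') :
    j' = j'' := by
  rcases lt_trichotomy j' j'' with hlt | heq | hlt
  · exact absurd h''.2.1 (h'.2.2 j'' h''.1 hlt)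
  · exact heq
  · exact absurd h'.2.1 (h''.2.2 j' h'.1 hlt)

theorem exists_isLastChild_of_nss_eq (hji : j + 1 < i) (hi : i ≤ S.length) (h : nss S j = i) :
    ∃ j', IsLastChild S j j' ∧ nss S j' = i := by
  obtain ⟨hij, hmid⟩ := (nss_eq_iff (by omega) hi).1 h
  obtain ⟨j', hj'mem, hmin⟩ :=
    (Finset.Ioo j i).exists_min_image (S.drop ·) ⟨j + 1, Finset.mem_Ioo.2 ⟨by omega, hji⟩⟩
  obtain ⟨hjj', hj'i⟩ := Finset.mem_Ioo.1 hj'mem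
  have hmin' : ∀ m, j < m → m < i → S.drop j' ≤ S.drop m :=
    fun m hjm hmi => hmin m (Finset.mem_Ioo.2 ⟨hjm, hmi⟩)
  have hlt : S.drop j < S.drop j' := hmid j' hjj' hj'i
  have hpss : pss S j' = (j : ℤ) :=
    pss_eq_natCast_iff.2 ⟨hjj', hlt, fun m hjm hmj' => hmin' m hjm (by omega)⟩
  refine ⟨j', ⟨by omega, hpss, fun k hk hj'k hpk => ?_⟩,
    (nss_eq_iff hj'i hi).2 ⟨hij.trans hlt, ?_⟩⟩
  · obtain ⟨-, hjk, -⟩ := pss_eq_natCast_iff.1 hpk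
    rcases lt_or_ge k i with hki | hik
    · have heq := le_antisymm (drop_le_drop_of_pss_eq hpk hjj' hj'k.le) (hmin' k (by omega) hki)
      exact hj'k.ne' ((drop_eq_drop_iff (by omega) (by omega)).1 heq)
    · exact lt_asymm hij (hjk.trans_le (drop_le_drop_of_pss_eq hpk (by omega) hik))
  · intro m hj'm hmi
    refine (hmin' m (by omega) hmi).lt_of_ne fun heq => hj'm.ne ?_
    exact (drop_eq_drop_iff (by omega) (by omega)).1 heq

theorem nss_eq_of_isLastChild (hj : j < S.length) (h : IsLastChild S j j') :
    nss S j = nss S j' := by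
  have hj'n := lt_nss_of_pss_eq hj h.2.1
  obtain ⟨hjn, hnS, -⟩ := nss_mem hj
  obtain ⟨j'', h'', hnss⟩ :=
    exists_isLastChild_of_nss_eq (by have := (pss_eq_natCast_iff.1 h.2.1).1; omega) hnS rfl
  rw [← hnss, h''.unique h]

end

theorem stmt8_general {α : Type*} [LinearOrder α] (S : List α)
    {i j : ℕ} (hji : j < i) (hi : i ≤ S.length) :
    nss S j = i ↔
      (j = i - 1 ∧ Slt (S.drop i) (S.drop j)) ∨
      (∃ j', j' < S.length ∧ pss S j' = (j : ℤ) ∧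
        (∀ k, k < S.length → j' < k → pss S k ≠ (j : ℤ)) ∧ nss S j' = i) := by
  have hj : j < S.length := hji.trans_le hi
  constructor
  · intro h
    by_cases hij : i = j + 1
    · exact Or.inl ⟨by omega, ((nss_eq_iff hji hi).1 h).1⟩
    · obtain ⟨j', ⟨hj', hpss, hlast⟩, hnss⟩ := exists_isLastChild_of_nss_eq (by omega) hi h
      exact Or.inr ⟨j', hj', hpss, hlast, hnss⟩
  · rintro (⟨rfl, hlt⟩ | ⟨j', hj', hpss, hlast, hnss⟩)
    · exact (nss_eq_iff hji hi).2 ⟨hlt, fun k hjk hki => by omega⟩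
    · exact (nss_eq_of_isLastChild hj ⟨hj', hpss, hlast⟩).trans hnss

/-- for `j < i`, `nss[j] = i` iff either `j = i - 1` and `S_j ≻ S_i`, or
`j` has a last child `j'` in the `pss`-tree with `nss[j'] = i`. -/
theorem stmt8 {α : Type*} [LinearOrder α] (S : List α) (hS : NullTerminated S)
    {i j : ℕ} (hji : j < i) (hi : i ≤ S.length) :
    nss S j = i ↔
      (j = i - 1 ∧ Slt (S.drop i) (S.drop j)) ∨
      (∃ j', j' < S.length ∧ pss S j' = (j : ℤ) ∧
        (∀ k, k < S.length → j' < k → pss S k ≠ (j : ℤ)) ∧ nss S j' = i) :=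
  stmt8_general S hji hi
end

section
/- Let c_1 < c_2 < ... < c_k be the children of index i in the pss-tree (i.e., all indices c with pss[c] = i). Then the Lyndon prefix of S_i factors as Ls_i = S[i] · Ls_{c_1} · Ls_{c_2} · ... · Ls_{c_k}; equivalently, S[i..nss[i]) = S[i] · S[c_1..c_2) · ... · S[c_k..nss[i]), with nss[c_j] = c_{j+1} for j < k and nss[c_k] = nss[i]. -/
set_option linter.unusedSectionVars false

section Aux
variable {α : Type*} [LinearOrder α]

lemma slt_iff {α : Type*} [LinearOrder α] {u v : List α} : Slt u v ↔ u < v := Iff.rfl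

variable {α : Type*} [LinearOrder α]

lemma drop_ne_drop {S : List α} {i j : ℕ} (h : i < j) (hj : j ≤ S.length) :
    S.drop i ≠ S.drop j := by
  intro he
  have := congrArg List.length he
  simp only [List.length_drop] at this
  omega

lemma lt_of_suffix {S : List α} {i j : ℕ} (h : i < j) (hj : j ≤ S.length)
    (hns : ¬ Slt (S.drop j) (S.drop i)) : Slt (S.drop i) (S.drop j) := by
  rw [slt_iff] at *
  rcases lt_trichotomy (S.drop i) (S.drop j) with h' | h' | h'
  · exact h'
  · exact absurd h' (drop_ne_drop h hj)
  · exact absurd h' hns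

lemma nss_spec {S : List α} {i : ℕ} (hi : i < S.length) :
    i < nss S i ∧ nss S i ≤ S.length ∧ Slt (S.drop (nss S i)) (S.drop i) := by
  have hne : { j | i < j ∧ j ≤ S.length ∧ Slt (S.drop j) (S.drop i) }.Nonempty := by
    refine ⟨S.length, hi, le_rfl, ?_⟩
    rw [List.drop_length]
    have : S.drop i ≠ [] := by
      intro h; have := congrArg List.length h; simp at this; omega
    rcases List.exists_cons_of_ne_nil this with ⟨a, l, hl⟩
    rw [hl]; exact List.Lex.nil
  exact Nat.sInf_mem hne

lemma nss_le {S : List α} {i j : ℕ} (h1 : i < j) (h2 : j ≤ S.length)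
    (h3 : Slt (S.drop j) (S.drop i)) : nss S i ≤ j :=
  Nat.sInf_le ⟨h1, h2, h3⟩

lemma lt_nss_slt {S : List α} {i j : ℕ} (hi : i < S.length) (h1 : i < j) (h2 : j < nss S i) :
    Slt (S.drop i) (S.drop j) := by
  have hn := nss_spec (S := S) hi
  have hj : j ≤ S.length := by omega
  refine lt_of_suffix h1 hj (fun hc => ?_)
  exact absurd (nss_le h1 hj hc) (by omega)

lemma pss_eq_iff {S : List α} {c i : ℕ} :
    pss S c = (i : ℤ) ↔ i < c ∧ Slt (S.drop i) (S.drop c) ∧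
      ∀ j, i < j → j < c → ¬ Slt (S.drop j) (S.drop c) := by
  set s : Set ℤ := { j : ℤ | 0 ≤ j ∧ j < (c : ℤ) ∧ Slt (S.drop j.toNat) (S.drop c) } with hs
  have hbdd : BddAbove (insert (-1) s) := by
    refine ⟨(c : ℤ), ?_⟩
    rintro x (rfl | hx)
    · omega
    · exact le_of_lt hx.2.1
  have hnon : (insert (-1) s).Nonempty := ⟨-1, Or.inl rfl⟩
  constructor
  · intro h
    have hmem : sSup (insert (-1) s) ∈ insert (-1) s := Int.csSup_mem hnon hbdd
    unfold pss at h
    rw [h] at hmem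
    rcases hmem with h' | h'
    · omega
    · obtain ⟨-, h2, h3⟩ := h'
      rw [Int.toNat_natCast] at h3
      refine ⟨by exact_mod_cast h2, h3, fun j hj1 hj2 hsl => ?_⟩
      have : (j : ℤ) ≤ (i : ℤ) := by
        rw [← h]
        refine le_csSup hbdd (Or.inr ⟨by positivity, by exact_mod_cast hj2, ?_⟩)
        rwa [Int.toNat_natCast]
      omega
  · rintro ⟨h1, h2, h3⟩
    unfold pss
    apply le_antisymm
    · apply csSup_le hnon
      rintro x (rfl | hx)
      · omega
      · obtain ⟨hx0, hx1, hx2⟩ := hx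
        by_contra hgt
        push_neg at hgt
        have hxi : i < x.toNat := by omega
        have hxc : x.toNat < c := by omega
        exact h3 x.toNat hxi hxc hx2
    · refine le_csSup hbdd (Or.inr ⟨by positivity, by exact_mod_cast h1, ?_⟩)
      rwa [Int.toNat_natCast]

lemma slt_trans {u v w : List α} (h1 : Slt u v) (h2 : Slt v w) : Slt u w := by
  rw [slt_iff] at *; exact lt_trans h1 h2

lemma slt_asymm {u v : List α} (h1 : Slt u v) (h2 : Slt v u) : False := by
  rw [slt_iff] at *; exact absurd h2 (not_lt_of_gt h1)

/-- every child of `i` lies strictly below `nss S i`. -/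
lemma child_lt_nss {S : List α} {i c : ℕ} (hi : i < S.length) (hch : pss S c = (i : ℤ)) :
    c < nss S i := by
  obtain ⟨h1, h2, h3⟩ := pss_eq_iff.1 hch
  obtain ⟨hn1, hn2, hn3⟩ := nss_spec (S := S) hi
  by_contra hle
  push_neg at hle
  rcases eq_or_lt_of_le hle with he | hlt
  · rw [he] at hn3; exact slt_asymm h2 hn3
  · exact h3 _ hn1 hlt (slt_trans hn3 h2)

lemma nss_child_le {S : List α} {i c : ℕ} (hi : i < S.length) (hch : pss S c = (i : ℤ)) :
    nss S c ≤ nss S i := by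
  obtain ⟨h1, h2, h3⟩ := pss_eq_iff.1 hch
  obtain ⟨hn1, hn2, hn3⟩ := nss_spec (S := S) hi
  exact nss_le (child_lt_nss hi hch) hn2 (slt_trans hn3 h2)

lemma child_first {S : List α} {i : ℕ} (hi : i < S.length) (h : i + 1 < nss S i) :
    pss S (i+1) = (i : ℤ) := by
  refine pss_eq_iff.2 ⟨lt_add_one i, lt_nss_slt hi (lt_add_one i) h, fun j hj1 hj2 _ => ?_⟩
  omega

lemma child_next {S : List α} {i c : ℕ} (hi : i < S.length) (hch : pss S c = (i : ℤ))
    (hc : c < S.length) (hlt : nss S c < nss S i) :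
    pss S (nss S c) = (i : ℤ) := by
  obtain ⟨h1, h2, h3⟩ := pss_eq_iff.1 hch
  obtain ⟨hc1, hc2, hc3⟩ := nss_spec (S := S) hc
  refine pss_eq_iff.2 ⟨by omega, lt_nss_slt hi (by omega) hlt, fun j hj1 hj2 hsl => ?_⟩
  rcases lt_trichotomy j c with h' | rfl | h'
  · exact h3 j hj1 h' (slt_trans hsl hc3)
  · exact slt_asymm hsl hc3
  · exact absurd (nss_le h' (by omega) (slt_trans hsl hc3)) (by omega)

noncomputable def chainAux {α : Type*} [LinearOrder α] (S : List α) (m : ℕ) : ℕ → ℕ → List ℕ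
  | 0, _ => []
  | fuel + 1, c => if c < m then c :: chainAux S m fuel (nss S c) else []

lemma chainAux_zero (S : List α) (m c : ℕ) : chainAux S m 0 c = [] := rfl

lemma chainAux_succ (S : List α) (m fuel c : ℕ) :
    chainAux S m (fuel + 1) c = if c < m then c :: chainAux S m fuel (nss S c) else [] := rfl

lemma chainAux_head (S : List α) (m fuel c : ℕ) :
    chainAux S m fuel c = [] ∨ (chainAux S m fuel c).head? = some c := by
  cases fuel with
  | zero => exact Or.inl rfl
  | succ fuel =>
    rw [chainAux_succ]
    by_cases h : c < m
    · rw [if_pos h]; exact Or.inr rfl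
    · rw [if_neg h]; exact Or.inl rfl

lemma take_tile {S : List α} {c m d : ℕ} (h1 : c ≤ m) (h2 : m ≤ d) :
    (S.drop c).take (d - c) = (S.drop c).take (m - c) ++ (S.drop m).take (d - m) := by
  have h : d - c = (m - c) + (d - m) := by omega
  rw [h, List.take_add, List.drop_drop]
  have h2 : m - c + c = m := by omega
  have h3 : c + (m - c) = m := by omega
  rw [h3]

lemma chain_spec {S : List α} {i : ℕ} (hi : i < S.length) :
    ∀ fuel c, i < c → c ≤ nss S i → nss S i - c ≤ fuel →
    (c < nss S i → pss S c = (i : ℤ) ∧ c < S.length) →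
    (∀ x, x ∈ chainAux S (nss S i) fuel c ↔ c ≤ x ∧ x < S.length ∧ pss S x = (i : ℤ)) ∧
    (chainAux S (nss S i) fuel c).Chain' (· < ·) ∧
    (chainAux S (nss S i) fuel c).Chain' (fun a b => nss S a = b) ∧
    (∀ y ∈ (chainAux S (nss S i) fuel c).getLast?, nss S y = nss S i) ∧
    ((chainAux S (nss S i) fuel c).map (Ls S)).flatten = (S.drop c).take (nss S i - c) := by
  intro fuel
  induction fuel with
  | zero =>
    intro c hc1 hc2 hc3 _
    have hceq : c = nss S i := by omega
    rw [chainAux_zero]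
    refine ⟨fun x => ?_, List.isChain_nil, List.isChain_nil, fun y hy => absurd hy (by simp), ?_⟩
    · simp only [List.not_mem_nil, false_iff]
      rintro ⟨hx1, hx2, hx3⟩
      have := child_lt_nss hi hx3
      omega
    · simp [hceq]
  | succ fuel ih =>
    intro c hc1 hc2 hc3 hch
    by_cases hcm : c < nss S i
    case neg =>
      have hceq : c = nss S i := by omega
      rw [chainAux_succ, if_neg hcm]
      refine ⟨fun x => ?_, List.isChain_nil, List.isChain_nil, fun y hy => absurd hy (by simp), ?_⟩
      · simp only [List.not_mem_nil, false_iff]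
        rintro ⟨hx1, hx2, hx3⟩
        have := child_lt_nss hi hx3
        omega
      · simp [hceq]
    case pos =>
    obtain ⟨hpss, hcS⟩ := hch hcm
    rw [chainAux_succ, if_pos hcm]
    set d := nss S c with hd
    obtain ⟨hd1, hd2, hd3⟩ := nss_spec (S := S) hcS
    rw [← hd] at hd1 hd2 hd3
    have hdle : d ≤ nss S i := nss_child_le hi hpss
    have hdch : d < nss S i → pss S d = (i : ℤ) ∧ d < S.length := by
      intro hlt
      refine ⟨child_next hi hpss hcS (hd ▸ hlt), ?_⟩
      have := (nss_spec (S := S) hi).2.1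
      omega
    obtain ⟨ihmem, ihlt, ihnss, ihlast, ihflat⟩ := ih d (by omega) hdle (by omega) hdch
    have hempty_eq : chainAux S (nss S i) fuel d = [] → d = nss S i := by
      intro he
      by_contra hne
      obtain ⟨hp, hdS⟩ := hdch (by omega)
      have := (ihmem d).2 ⟨le_rfl, hdS, hp⟩
      rw [he] at this
      exact absurd this (List.not_mem_nil)
    have hheadd : ∀ y ∈ (chainAux S (nss S i) fuel d).head?, y = d := by
      intro y hy
      rcases chainAux_head S (nss S i) fuel d with he | he
      · rw [he] at hy; exact absurd hy (by simp)
      · rw [he] at hy; simp at hy; exact hy.symm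
    refine ⟨?_, ?_, ?_, ?_, ?_⟩
    · intro x
      simp only [List.mem_cons, ihmem]
      constructor
      · rintro (rfl | ⟨hx1, hx2, hx3⟩)
        · exact ⟨le_rfl, hcS, hpss⟩
        · exact ⟨by omega, hx2, hx3⟩
      · rintro ⟨hx1, hx2, hx3⟩
        rcases eq_or_lt_of_le hx1 with rfl | hlt
        · exact Or.inl rfl
        · refine Or.inr ⟨?_, hx2, hx3⟩
          by_contra hxd
          push_neg at hxd
          have hslt : Slt (S.drop c) (S.drop x) := lt_nss_slt hcS hlt (by omega)
          exact (pss_eq_iff.1 hx3).2.2 c hc1 hlt hslt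
    · refine List.isChain_cons.2 ⟨fun y hy => ?_, ihlt⟩
      have hmy : y ∈ chainAux S (nss S i) fuel d := List.mem_of_mem_head? hy
      have := ((ihmem y).1 hmy).1
      omega
    · refine List.isChain_cons.2 ⟨fun y hy => ?_, ihnss⟩
      have := hheadd y hy
      omega
    · intro y hy
      cases hl : chainAux S (nss S i) fuel d with
      | nil =>
        have hdn := hempty_eq hl
        rw [hl] at hy
        simp at hy
        subst hy
        omega
      | cons a l =>
        rw [hl] at hy ihlast
        rw [List.getLast?_cons_cons] at hy
        exact ihlast y hy
    · rw [List.map_cons, List.flatten_cons, ihflat]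
      show (S.drop c).take (nss S c - c) ++ _ = _
      rw [← hd, (take_tile (S := S) (le_of_lt hd1) hdle).symm]

end Aux

/-- if `cs` is the increasing list of the children of `i` in the `pss`-tree,
then `Ls_i = S[i] · Ls_{c_1} ⋯ Ls_{c_k}`, with `nss[c_j] = c_{j+1}` for consecutive
children and `nss[c_k] = nss[i]` for the last child. -/
theorem stmt10 {α : Type*} [LinearOrder α] (S : List α) (hS : NullTerminated S)
    {i : ℕ} (hi : i < S.length) (cs : List ℕ)
    (hsort : cs.Chain' (· < ·))
    (hmem : ∀ c, c ∈ cs ↔ c < S.length ∧ pss S c = (i : ℤ)) :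
    Ls S i = (S.drop i).take 1 ++ (cs.map (Ls S)).flatten ∧
      cs.Chain' (fun a b => nss S a = b) ∧
      ∀ hne : cs ≠ [], nss S (cs.getLast hne) = nss S i := by
  obtain ⟨hn1, hn2, hn3⟩ := nss_spec (S := S) hi
  have hch : i + 1 < nss S i → pss S (i+1) = (i : ℤ) ∧ i + 1 < S.length := by
    intro h
    exact ⟨child_first hi h, by omega⟩
  obtain ⟨cmem, clt, cnss, clast, cflat⟩ :=
    chain_spec hi (nss S i) (i + 1) (lt_add_one i) (by omega) (by omega) hch
  set L := chainAux S (nss S i) (nss S i) (i + 1) with hL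
  have hcseq : cs = L := by
    have hnd1 : cs.Nodup := (List.isChain_iff_pairwise.1 hsort).imp ne_of_lt
    have hnd2 : L.Nodup := (List.isChain_iff_pairwise.1 clt).imp ne_of_lt
    have hperm : cs.Perm L := by
      rw [List.perm_ext_iff_of_nodup hnd1 hnd2]
      intro a
      rw [hmem a, cmem a]
      constructor
      · rintro ⟨h1, h2⟩
        have := (pss_eq_iff.1 h2).1
        exact ⟨by omega, h1, h2⟩
      · rintro ⟨_, h1, h2⟩
        exact ⟨h1, h2⟩
    exact List.Perm.eq_of_pairwise (fun a b _ _ h1 h2 => absurd (lt_trans h1 h2) (lt_irrefl a))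
      (List.isChain_iff_pairwise.1 hsort) (List.isChain_iff_pairwise.1 clt) hperm
  subst hcseq
  refine ⟨?_, cnss, ?_⟩
  · rw [cflat]
    show (S.drop i).take (nss S i - i) = _
    have := take_tile (S := S) (c := i) (m := i + 1) (d := nss S i) (by omega) (by omega)
    rw [this]
    congr 2
    omega
  · intro hne
    exact clast _ (List.getLast?_eq_getLast hne ▸ rfl)
end
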